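/- For every family of elements c_{i,j} ∈ t^{λ_i − λ_j}𝒪, one for each case-(B) pair (i,j), there exists v ∈ V such that (x⁻¹ v x)_{i,j} − c_{i,j} ∈ t^{ν*_i − ν*_j}𝒪 for every case-(B) pair (i,j). (This is the surjectivity of the map φ₁ : V → ⊕_{case (B)} t^{λ_i−λ_j}𝒪 / t^{ν*_i−ν*_j}𝒪 of Lemma 4.3.) -/
import Mathlib


open Matrix

noncomputable section

/-- The ring `𝒪 = ℂ[[t]]` of formal power series. -/
abbrev OO : Type := PowerSeries ℂ

/-- The field `K = ℂ((t))` of formal Laurent series. -/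
abbrev KK : Type := LaurentSeries ℂ

/-- `t^k ∈ K` for an integer `k`. -/
def tz (k : ℤ) : KK := HahnSeries.single k 1

/-- The inclusion `𝒪 → K`. -/
def coeO : OO →+* KK := HahnSeries.ofPowerSeries ℤ ℂ

/-- `f` belongs to the `𝒪`-lattice `t^k 𝒪 ⊆ K`. -/
def memT (k : ℤ) (f : KK) : Prop := ∃ w : OO, f = tz k * coeO w

/-- The `GL`-coordinates of the coroot `β∨ = e_p − e_{q+1}` (indices `0`-based). -/
def bcov (p q : ℕ) (i : ℕ) : ℤ := (if i = p then 1 else 0) - (if i = q + 1 then 1 else 0)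

/-- The matrix `x = I + Σ_{j=p+1}^{q+1} t^{λ_p − λ_j − N} E_{p,j}` (indices `0`-based). -/
def xMat (n N p q : ℕ) (lam : ℕ → ℤ) : Matrix (Fin (n+1)) (Fin (n+1)) KK :=
  Matrix.of fun i j =>
    if i = j then 1
    else if (i : ℕ) = p ∧ p < (j : ℕ) ∧ (j : ℕ) ≤ q + 1 then tz (lam p - lam j - N)
    else 0

/-- `V`: trace-zero matrices with entries in `𝒪` such that `v_{i,j} ∈ t^{λ_i−λ_j}𝒪` for `i < j`. -/
def Vset (n : ℕ) (lam : ℕ → ℤ) : Set (Matrix (Fin (n+1)) (Fin (n+1)) KK) :=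
  {v | Matrix.trace v = 0 ∧ (∀ i j : Fin (n+1), memT 0 (v i j)) ∧
    ∀ i j : Fin (n+1), i < j → memT (lam i - lam j) (v i j)}

/-- Case (B): `i ≠ p` and (`j ≤ p` or `j > q+1`). -/
def caseB (p q i j : ℕ) : Prop := i ≠ p ∧ (j ≤ p ∨ q + 1 < j)

lemma tz_mul (a b : ℤ) : tz a * tz b = tz (a + b) := by
  unfold tz
  rw [HahnSeries.single_mul_single, one_mul]

lemma tz_zero : tz 0 = 1 := rfl

lemma coeO_X_pow (m : ℕ) : coeO (PowerSeries.X ^ m) = tz (m : ℤ) := by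
  induction m with
  | zero => simp [tz_zero]
  | succ k ih =>
      rw [pow_succ, _root_.map_mul, ih]
      have : coeO PowerSeries.X = tz 1 := by
        unfold coeO tz
        exact HahnSeries.ofPowerSeries_X
      rw [this, tz_mul]
      norm_num

lemma memT_mono {k m : ℤ} (h : m ≤ k) {f : KK} (hf : memT k f) : memT m f := by
  obtain ⟨w, rfl⟩ := hf
  refine ⟨PowerSeries.X ^ (k - m).toNat * w, ?_⟩
  rw [_root_.map_mul, coeO_X_pow, ← mul_assoc, tz_mul]
  congr 2
  omega

lemma memT_zero_elem (k : ℤ) : memT k 0 := ⟨0, by simp⟩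

/-- The nilpotent part `u` of `x`. -/
def uMat (n N p q : ℕ) (lam : ℕ → ℤ) : Matrix (Fin (n+1)) (Fin (n+1)) KK :=
  Matrix.of fun i j =>
    if (i : ℕ) = p ∧ p < (j : ℕ) ∧ (j : ℕ) ≤ q + 1 then tz (lam p - lam j - N) else 0

lemma xMat_eq (n N p q : ℕ) (lam : ℕ → ℤ) :
    xMat n N p q lam = 1 + uMat n N p q lam := by
  ext i j
  simp only [xMat, uMat, Matrix.of_apply, Matrix.add_apply, Matrix.one_apply]
  by_cases h : i = j
  · subst h
    have : ¬((i : ℕ) = p ∧ p < (i : ℕ) ∧ (i : ℕ) ≤ q + 1) := by omega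
    simp [this]
  · simp [h]

lemma uMat_sq (n N p q : ℕ) (lam : ℕ → ℤ) :
    uMat n N p q lam * uMat n N p q lam = 0 := by
  apply Matrix.ext
  intro i j
  rw [Matrix.mul_apply]
  simp only [Matrix.zero_apply]
  apply Finset.sum_eq_zero
  intro k _
  simp only [uMat, Matrix.of_apply]
  split_ifs with h1 h2 h2
  · omega
  · exact mul_zero _
  · exact zero_mul _
  · exact zero_mul _

lemma xMat_inv (n N p q : ℕ) (lam : ℕ → ℤ) :
    (xMat n N p q lam)⁻¹ = 1 - uMat n N p q lam := by
  apply Matrix.inv_eq_right_inv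
  rw [xMat_eq]
  have h := uMat_sq n N p q lam
  set u := uMat n N p q lam
  calc (1 + u) * (1 - u) = 1 + u - (u + u * u) := by
        rw [mul_sub, mul_one, add_mul, one_mul]
    _ = 1 := by rw [h, add_zero]; abel

/-- surjectivity of `φ₁`, Lemma 4.3: for any family `c_{i,j} ∈ t^{λ_i−λ_j}𝒪`
indexed by the case-(B) pairs, there is `v ∈ V` with
`(x⁻¹ v x)_{i,j} ≡ c_{i,j} mod t^{ν*_i−ν*_j}𝒪` for every case-(B) pair.
(Indices are `0`-based: rows and columns run through `0,…,n`, and `0 ≤ p ≤ q ≤ n−1`.) -/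
theorem stmt7 (n : ℕ) (hn : 1 ≤ n) (N : ℕ) (hN : 1 ≤ N)
    (p q : ℕ) (hpq : p ≤ q) (hq : q < n)
    (lam mu : ℕ → ℤ)
    (hlam : ∀ i j : ℕ, i ≤ j → j ≤ n → lam j ≤ lam i)
    (hmu : ∀ i j : ℕ, i ≤ j → j ≤ n → mu j ≤ mu i)
    (nus : ℕ → ℤ) (hnus : ∀ i, nus i = lam i + mu i - N * bcov p q i)
    (hnusdom : ∀ i j : ℕ, i ≤ j → j ≤ n → nus j ≤ nus i)
    (h2a : (N : ℤ) ≤ lam p - lam (p + 1)) (h2b : (N : ℤ) ≤ lam q - lam (q + 1))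
    (h2c : (N : ℤ) ≤ mu p - mu (p + 1)) (h2d : (N : ℤ) ≤ mu q - mu (q + 1))
    (c : Fin (n+1) → Fin (n+1) → KK)
    (hc : ∀ i j : Fin (n+1), i < j → caseB p q i j → memT (lam i - lam j) (c i j)) :
    ∃ v ∈ Vset n lam, ∀ i j : Fin (n+1), i < j → caseB p q i j →
      memT (nus i - nus j) (((xMat n N p q lam)⁻¹ * v * xMat n N p q lam) i j - c i j) := by
  classical
  -- Define v : put c on the case-(B) pairs with i < j, zero elsewhere.
  set v : Matrix (Fin (n+1)) (Fin (n+1)) KK :=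
    Matrix.of (fun i j =>
      if i < j ∧ (i : ℕ) ≠ p ∧ ((j : ℕ) ≤ p ∨ q + 1 < (j : ℕ)) then c i j else 0) with hv
  have hventry : ∀ i j : Fin (n+1),
      v i j = if i < j ∧ (i : ℕ) ≠ p ∧ ((j : ℕ) ≤ p ∨ q + 1 < (j : ℕ)) then c i j else 0 :=
    fun i j => rfl
  refine ⟨v, ⟨?_, ?_, ?_⟩, ?_⟩
  · -- trace
    unfold Matrix.trace
    apply Finset.sum_eq_zero
    intro i _
    simp only [Matrix.diag_apply, hventry]
    have : ¬(i < i ∧ (i : ℕ) ≠ p ∧ ((i : ℕ) ≤ p ∨ q + 1 < (i : ℕ))) := by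
      rintro ⟨h, -⟩; exact lt_irrefl i h
    simp [this]
  · -- entries in 𝒪
    intro i j
    rw [hventry]
    split_ifs with h
    · obtain ⟨hij, hnp, hcase⟩ := h
      have hm := hc i j hij ⟨hnp, hcase⟩
      apply memT_mono _ hm
      have : (j : ℕ) ≤ n := by omega
      have := hlam i j (le_of_lt hij) this
      omega
    · exact memT_zero_elem 0
  · -- lattice condition
    intro i j hij
    rw [hventry]
    split_ifs with h
    · exact hc i j hij ⟨h.2.1, h.2.2⟩
    · exact memT_zero_elem _
  · -- the congruence condition
    intro i j hij hB
    obtain ⟨hnp, hcase⟩ := hB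
    -- compute the conjugated entry
    have hentry : ((xMat n N p q lam)⁻¹ * v * xMat n N p q lam) i j = v i j := by
      rw [xMat_inv, xMat_eq]
      set u := uMat n N p q lam with hu
      have expand : (1 - u) * v * (1 + u) = v + v * u - (u * v + u * (v * u)) := by
        calc (1 - u) * v * (1 + u) = v * (1 + u) - u * (v * (1 + u)) := by
              rw [sub_mul, one_mul, sub_mul, mul_assoc]
          _ = v + v * u - (u * v + u * (v * u)) := by rw [mul_add, mul_one, mul_add]
      rw [expand]
      have hvu : (v * u) i j = 0 := by
        rw [Matrix.mul_apply]
        apply Finset.sum_eq_zero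
        intro k _
        have : u k j = 0 := by
          simp only [hu, uMat, Matrix.of_apply]
          have : ¬((k : ℕ) = p ∧ p < (j : ℕ) ∧ (j : ℕ) ≤ q + 1) := by omega
          simp [this]
        rw [this, mul_zero]
      have huv : (u * v) i j = 0 := by
        rw [Matrix.mul_apply]
        apply Finset.sum_eq_zero
        intro k _
        have : u i k = 0 := by
          simp only [hu, uMat, Matrix.of_apply]
          have : ¬((i : ℕ) = p ∧ p < (k : ℕ) ∧ (k : ℕ) ≤ q + 1) := by omega
          simp [this]
        rw [this, zero_mul]
      have huvu : (u * (v * u)) i j = 0 := by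
        rw [Matrix.mul_apply]
        apply Finset.sum_eq_zero
        intro k _
        have : u i k = 0 := by
          simp only [hu, uMat, Matrix.of_apply]
          have : ¬((i : ℕ) = p ∧ p < (k : ℕ) ∧ (k : ℕ) ≤ q + 1) := by omega
          simp [this]
        rw [this, zero_mul]
      simp [Matrix.sub_apply, Matrix.add_apply, hvu, huv, huvu]
    rw [hentry, hventry]
    have hcond : i < j ∧ (i : ℕ) ≠ p ∧ ((j : ℕ) ≤ p ∨ q + 1 < (j : ℕ)) := ⟨hij, hnp, hcase⟩
    rw [if_pos hcond, sub_self]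
    exact memT_zero_elem _
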